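/- Let A be a normed unital algebra over ℂ, n ∈ ℕ, and let τ : A^{2n+1} → ℂ be a continuous (2n+1)-multilinear cyclic cocycle. Let p : ℝ → A be a differentiable path of idempotents, i.e. p(t)·p(t) = p(t) for all t ∈ ℝ. Then the function t ↦ τ(p(t), p(t), …, p(t)) (the value of τ on 2n+1 copies of p(t)) is constant on ℝ. -/

import Mathlib

/-- The Hochschild coboundary of a `(2n+1)`-multilinear functional `τ : A^{2n+1} → ℂ`:
`(bτ)(a₀, …, a_{2n+1}) = Σ_{i=0}^{2n} (−1)^i τ(a₀, …, aᵢ·a_{i+1}, …, a_{2n+1})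
  + (−1)^{2n+1} τ(a_{2n+1}·a₀, a₁, …, a_{2n})`. -/
noncomputable def hochschildCoboundary {A : Type*} [Ring A] (n : ℕ)
    (τ : (Fin (2 * n + 1) → A) → ℂ) (a : Fin (2 * n + 1 + 1) → A) : ℂ :=
  (∑ i : Fin (2 * n + 1), (-1 : ℂ) ^ (i : ℕ) *
      τ (fun j => if (j : ℕ) < (i : ℕ) then a j.castSucc
          else if (j : ℕ) = (i : ℕ) then a i.castSucc * a i.succ
          else a j.succ)) +
    (-1 : ℂ) ^ (2 * n + 1) *
      τ (fun j => if (j : ℕ) = 0 then a (Fin.last (2 * n + 1)) * a 0 else a j.castSucc)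

/-!
Differentiating `τ(p, …, p)` gives `∑ᵢ τ(p, …, p', …, p)`, and by cyclicity every term equals
`τ(p', p, …, p)`. Evaluated at `(x, p, …, p)`, the cocycle identity `bτ = 0` collapses to
`τ(xp, p, …, p) = τ(px, p, …, p)`: the `2n` middle faces all equal `τ(x, p, …, p)` and their
signs cancel. Differentiating `p² = p` gives `p' = p'p + pp'`, hence `pp'p = 0`, so
`τ(p'p, p, …, p) = τ(pp'p, p, …, p) = 0`, the same holds for `pp'`, and the derivative vanishes.
-/

open Function

section Cyclic

open Fin.NatCast

variable {m : ℕ} [NeZero m] {X Y : Type*} (τ : (Fin m → X) → Y)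

theorem cyclic_apply_sub_natCast (hcyclic : ∀ a : Fin m → X, τ (fun i => a (i - 1)) = τ a)
    (a : Fin m → X) (k : ℕ) : τ (fun i => a (i - k)) = τ a := by
  induction k with
  | zero => simp
  | succ k ih =>
    rw [← ih, ← hcyclic fun i => a (i - k)]
    simp only [Nat.cast_succ, sub_sub, add_comm]

theorem cyclic_apply_update_const (hcyclic : ∀ a : Fin m → X, τ (fun i => a (i - 1)) = τ a)
    (q v : X) (i : Fin m) : τ (update (fun _ => q) i v) = τ (update (fun _ => q) 0 v) := by
  rw [← cyclic_apply_sub_natCast τ hcyclic (update (fun _ => q) 0 v) i.val, Fin.cast_val_eq_self]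
  congr 1 with j
  simp only [update_apply, sub_eq_zero]

end Cyclic

theorem hochschildCoboundary_update_const_zero {A : Type*} [Ring A] (n : ℕ)
    (τ : (Fin (2 * n + 1) → A) → ℂ) {q : A} (hq : IsIdempotentElem q) (x : A) :
    hochschildCoboundary n τ (update (fun _ => q) 0 x) =
      τ (update (fun _ => q) 0 (x * q)) - τ (update (fun _ => q) 0 (q * x)) := by
  set a : Fin (2 * n + 1 + 1) → A := update (fun _ => q) 0 x
  have hface : ∀ i j : Fin (2 * n + 1),
      (if (j : ℕ) < i then a j.castSucc else if (j : ℕ) = i then a i.castSucc * a i.succ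
        else a j.succ) = update (fun _ => q) 0 (if i = 0 then x * q else x) j := by
    intro i j
    simp only [a, update_apply, Fin.ext_iff, Fin.val_zero, Fin.val_succ, Fin.val_castSucc]
    split_ifs <;> first | rfl | exact hq.eq | omega | contradiction
  have hlast : ∀ j : Fin (2 * n + 1),
      (if (j : ℕ) = 0 then a (Fin.last (2 * n + 1)) * a 0 else a j.castSucc) =
        update (fun _ => q) 0 (q * x) j := by
    intro j
    simp only [a, update_apply, Fin.ext_iff, Fin.val_zero, Fin.val_last, Fin.val_castSucc]
    split_ifs <;> first | rfl | omega | contradiction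
  have hsigns : ∑ i : Fin (2 * n), (-1 : ℂ) ^ (i.succ : ℕ) = 0 := by
    simp only [Fin.val_succ, pow_succ, ← Finset.sum_mul,
      Fin.sum_univ_eq_sum_range (fun i => (-1 : ℂ) ^ i), neg_one_geom_sum]
    simp
  unfold hochschildCoboundary
  simp only [hface, hlast, Fin.sum_univ_succ, Fin.succ_ne_zero, if_true, if_false, Fin.val_zero,
    pow_zero, ← Finset.sum_mul, hsigns, (Odd.neg_one_pow ⟨n, rfl⟩ : (-1 : ℂ) ^ (2 * n + 1) = -1)]
  ring

theorem IsIdempotentElem.map_eq_zero_of_eq_mul_add_mul {R M : Type*} [NonUnitalRing R]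
    [AddCommGroup M] (φ : R →+ M) {q d : R} (hq : IsIdempotentElem q)
    (hφ : ∀ x, φ (x * q) = φ (q * x)) (hd : d = d * q + q * d) : φ d = 0 := by
  have hqdq : q * d * q = 0 := by
    have := congrArg (q * ·) hd
    simp only [mul_add, ← mul_assoc, hq.eq] at this
    exact right_eq_add.mp this
  have hdq : φ (d * q) = 0 := by
    rw [← hq.eq, ← mul_assoc, hφ, ← mul_assoc, hqdq, map_zero]
  rw [hd, map_add, ← hφ, hdq, add_zero]

theorem HasDerivAt.eq_mul_add_mul_of_isIdempotentElem {𝕜 A : Type*} [NontriviallyNormedField 𝕜]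
    [NormedRing A] [NormedAlgebra 𝕜 A] {p : 𝕜 → A} {d : A} {u : 𝕜} (hp : HasDerivAt p d u)
    (hidem : ∀ᶠ t in nhds u, IsIdempotentElem (p t)) : d = d * p u + p u * d :=
  hp.unique <| (hp.mul hp).congr_of_eventuallyEq <| hidem.mono fun _ h => h.eq.symm

theorem ContinuousMultilinearMap.hasDerivAt_apply_const {𝕜 ι E F : Type*}
    [NontriviallyNormedField 𝕜] [Fintype ι] [DecidableEq ι] [NormedAddCommGroup E]
    [NormedSpace 𝕜 E] [NormedAddCommGroup F] [NormedSpace 𝕜 F]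
    (f : ContinuousMultilinearMap 𝕜 (fun _ : ι => E) F) {p : 𝕜 → E} {d : E} {u : 𝕜}
    (hp : HasDerivAt p d u) :
    HasDerivAt (fun t => f fun _ => p t) (∑ i, f (update (fun _ => p u) i d)) u := by
  simpa [comp_def] using (f.hasFDerivAt _).comp_hasDerivAt u (hasDerivAt_pi.mpr fun _ => hp)

/-- Let `A` be a normed unital algebra over `ℂ` and `τ` a continuous
`(2n+1)`-multilinear cyclic cocycle on `A`.  If `p : ℝ → A` is a differentiable path of
idempotents, then `t ↦ τ(p t, …, p t)` is constant on `ℝ`. -/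
theorem stmt3 {A : Type*} [NormedRing A] [NormedAlgebra ℂ A] (n : ℕ)
    (τ : ContinuousMultilinearMap ℂ (fun _ : Fin (2 * n + 1) => A) ℂ)
    (hcyclic : ∀ a : Fin (2 * n + 1) → A, τ (fun i => a (i - 1)) = τ a)
    (hcocycle : ∀ a : Fin (2 * n + 1 + 1) → A,
      hochschildCoboundary n (fun v => τ v) a = 0)
    (p : ℝ → A) (hdiff : Differentiable ℝ p)
    (hidem : ∀ t : ℝ, p t * p t = p t) (s t : ℝ) :
    τ (fun _ => p s) = τ (fun _ => p t) := by
  have hderiv : ∀ u, HasDerivAt (fun t => τ fun _ => p t) 0 u := by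
    intro u
    have hp := (hdiff u).hasDerivAt
    let φ := (τ.toMultilinearMap.toLinearMap (fun _ => p u) 0).toAddMonoidHom
    have hφ : ∀ x, φ (x * p u) = φ (p u * x) := fun x =>
      sub_eq_zero.mp <| (hochschildCoboundary_update_const_zero n _ (hidem u) x).symm.trans
        (hcocycle _)
    have hφd : φ (deriv p u) = 0 := IsIdempotentElem.map_eq_zero_of_eq_mul_add_mul φ (hidem u) hφ
      (hp.eq_mul_add_mul_of_isIdempotentElem (.of_forall hidem))
    have hsum : ∑ i, τ (update (fun _ => p u) i (deriv p u)) = 0 :=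
      Finset.sum_eq_zero fun i _ => (cyclic_apply_update_const _ hcyclic _ _ i).trans hφd
    simpa [hsum] using (τ.restrictScalars ℝ).hasDerivAt_apply_const hp
  exact is_const_of_deriv_eq_zero (fun u => (hderiv u).differentiableAt)
    (fun u => (hderiv u).deriv) s t
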